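/- For fixed positive integers P, and a constraint ∑_{i=1}^P X_i ≤ S with each X_i ≥ 0, the product ∏_{i=1}^P C(X_i + B, B) of binomial coefficients is maximized when all X_i are equal to S/P; in particular, ∏_{i=1}^P C(X_i + B, B) ≤ C(⌈S/P⌉ + B, B)^P. -/
import Mathlib

theorem stmt_7 (P B S : ℕ) (hP : 0 < P) (hB : 0 < B) (hS : 0 < S)
    (X : Fin P → ℕ) (hsum : ∑ i, X i ≤ S) :
    ∏ i, Nat.choose (X i + B) B ≤ (Nat.choose (⌈(S : ℝ) / P⌉₊ + B) B) ^ P := by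
  set m := ⌈(S : ℝ) / P⌉₊ with hm
  set f : ℕ → ℝ := fun x => (Nat.choose (x + B) B : ℝ) with hf
  set ρ : ℝ := ((m : ℝ) + B + 1) / ((m : ℝ) + 1) with hρ
  have hmpos : (0:ℝ) < (m:ℝ) + 1 := by positivity
  have hρpos : 0 < ρ := by positivity
  have hρ1 : 1 ≤ ρ := by
    rw [hρ, le_div_iff₀ hmpos]
    have : (0:ℝ) ≤ (B:ℝ) := Nat.cast_nonneg B
    linarith
  have hfpos : ∀ x, 0 < f x := by
    intro x
    have : 0 < Nat.choose (x + B) B := Nat.choose_pos (Nat.le_add_left B x)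
    simp only [hf]
    exact_mod_cast this
  -- key identity: f(x+1) = ((x+B+1)/(x+1)) * f(x)
  have key : ∀ x : ℕ, f (x+1) = (((x:ℝ)+(B:ℝ)+1) / ((x:ℝ)+1)) * f x := by
    intro x
    have h1 : (x+B).choose x = (x+B).choose B := by
      rw [← Nat.choose_symm (Nat.le_add_right x B)]; congr 1 <;> omega
    have h2 : (x+B+1).choose (x+1) = (x+1+B).choose B := by
      rw [← Nat.choose_symm (by omega : x+1 ≤ x+B+1)]; congr 1 <;> omega
    have h3 := Nat.add_one_mul_choose_eq (x+B) x
    rw [h1, h2] at h3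
    have h4 := congrArg (fun n : ℕ => (n : ℝ)) h3
    push_cast at h4
    have hx1 : ((x:ℝ)+1) ≠ 0 := by positivity
    simp only [hf]
    push_cast
    field_simp
    linarith
  -- step up: m ≤ x → f(x+1) ≤ ρ * f x
  have stepup : ∀ x : ℕ, m ≤ x → f (x+1) ≤ ρ * f x := by
    intro x hx
    have hx1 : (0:ℝ) < (x:ℝ) + 1 := by positivity
    have hmx : (m:ℝ) ≤ (x:ℝ) := by exact_mod_cast hx
    have hB0 : (0:ℝ) ≤ (B:ℝ) := Nat.cast_nonneg B
    have hratio : ((x:ℝ)+(B:ℝ)+1) / ((x:ℝ)+1) ≤ ρ := by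
      rw [hρ, div_le_div_iff₀ hx1 hmpos]; nlinarith
    rw [key x]
    exact mul_le_mul_of_nonneg_right hratio (hfpos x).le
      |>.trans_eq rfl
  -- step down: x ≤ m → ρ * f x ≤ f (x+1)
  have stepdown : ∀ x : ℕ, x ≤ m → ρ * f x ≤ f (x+1) := by
    intro x hx
    have hx1 : (0:ℝ) < (x:ℝ) + 1 := by positivity
    have hmx : (x:ℝ) ≤ (m:ℝ) := by exact_mod_cast hx
    have hB0 : (0:ℝ) ≤ (B:ℝ) := Nat.cast_nonneg B
    have hratio : ρ ≤ ((x:ℝ)+(B:ℝ)+1) / ((x:ℝ)+1) := by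
      rw [hρ, div_le_div_iff₀ hmpos hx1]; nlinarith
    rw [key x]
    exact mul_le_mul_of_nonneg_right hratio (hfpos x).le
  -- up: f (m+k) ≤ f m * ρ^k
  have up : ∀ k : ℕ, f (m+k) ≤ f m * ρ^k := by
    intro k
    induction k with
    | zero => simp
    | succ k ih =>
      have := stepup (m+k) (Nat.le_add_right m k)
      calc f (m+(k+1)) = f ((m+k)+1) := by ring_nf
        _ ≤ ρ * f (m+k) := this
        _ ≤ ρ * (f m * ρ^k) := by nlinarith [hfpos (m+k)]
        _ = f m * ρ^(k+1) := by ring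
  -- down: k ≤ m → f (m-k) * ρ^k ≤ f m
  have down : ∀ k : ℕ, k ≤ m → f (m-k) * ρ^k ≤ f m := by
    intro k
    induction k with
    | zero => simp
    | succ k ih =>
      intro hk
      have hk' : k ≤ m := by omega
      have hstep := stepdown (m-(k+1)) (by omega)
      have heq : (m-(k+1)) + 1 = m - k := by omega
      rw [heq] at hstep
      have hρk : (0:ℝ) ≤ ρ^k := by positivity
      calc f (m-(k+1)) * ρ^(k+1) = (ρ * f (m-(k+1))) * ρ^k := by ring
        _ ≤ f (m-k) * ρ^k := by nlinarith
        _ ≤ f m := ih hk'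
  -- pointwise: f x * ρ^m ≤ f m * ρ^x
  have pointwise : ∀ x : ℕ, f x * ρ^m ≤ f m * ρ^x := by
    intro x
    rcases le_or_gt m x with h | h
    · have := up (x - m)
      have hx : m + (x - m) = x := by omega
      rw [hx] at this
      calc f x * ρ^m ≤ (f m * ρ^(x-m)) * ρ^m := by nlinarith [pow_pos hρpos m]
        _ = f m * ρ^((x-m)+m) := by rw [pow_add]; ring
        _ = f m * ρ^x := by rw [Nat.sub_add_cancel h]
    · have hle : m - x ≤ m := by omega
      have hd := down (m-x) hle
      have hx : m - (m-x) = x := by omega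
      rw [hx] at hd
      have hρx : (0:ℝ) ≤ ρ^x := by positivity
      calc f x * ρ^m = f x * ρ^((m-x)+x) := by rw [Nat.sub_add_cancel h.le]
        _ = (f x * ρ^(m-x)) * ρ^x := by rw [pow_add]; ring
        _ ≤ f m * ρ^x := by nlinarith
  -- sum bound
  have hSm : ∑ i, X i ≤ P * m := by
    have h1 : (S:ℝ)/P ≤ (m:ℝ) := Nat.le_ceil _
    have hP0 : (0:ℝ) < (P:ℝ) := by exact_mod_cast hP
    have h2 : (S:ℝ) ≤ (P:ℝ) * (m:ℝ) := by
      rw [div_le_iff₀ hP0] at h1; linarith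
    have h3 : S ≤ P * m := by exact_mod_cast h2
    omega
  -- final
  rw [← Nat.cast_le (α := ℝ)]
  push_cast
  have hprod : (∏ i, f (X i)) * ρ^(P*m) ≤ (f m)^P * ρ^(P*m) := by
    calc (∏ i, f (X i)) * ρ^(P*m) = ∏ i, (f (X i) * ρ^m) := by
          rw [Finset.prod_mul_distrib, Finset.prod_const, Finset.card_univ,
            Fintype.card_fin, ← pow_mul, Nat.mul_comm m P]
      _ ≤ ∏ i, (f m * ρ^(X i)) := by
          apply Finset.prod_le_prod
          · intro i _; positivity
          · intro i _; exact pointwise (X i)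
      _ = (f m)^P * ρ^(∑ i, X i) := by
          rw [Finset.prod_mul_distrib, Finset.prod_const, Finset.card_univ,
            Fintype.card_fin, Finset.prod_pow_eq_pow_sum]
      _ ≤ (f m)^P * ρ^(P*m) := by
          apply mul_le_mul_of_nonneg_left
          · exact pow_le_pow_right₀ hρ1 hSm
          · positivity
  have hρPm : (0:ℝ) < ρ^(P*m) := by positivity
  have := le_of_mul_le_mul_right hprod hρPm
  simpa [hf] using this
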